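/- arXiv:1611.05334 — 7 statements merged into one kernel-verified Lean document; each statement's English description precedes it below -/
import Mathlib

section
/- Let k be a field, g a finite-dimensional Lie algebra over k, h ⊆ g a Lie subalgebra, m ⊆ g a linear subspace with g = h ⊕ m, projections P_h, P_m, and set ρ(x)u = P_m[x,u], φ(x,u) = P_h[x,u] for x ∈ h, u ∈ m. Then the following are equivalent: (i) there exists a linear subspace m̃ ⊆ g with g = h ⊕ m̃ and [x, v] ∈ m̃ for all x ∈ h, v ∈ m̃ (an h-invariant, i.e. reductive, complement); (ii) φ is a coboundary, i.e. there exists a linear map σ : m → h with φ(x,u) = σ(ρ(x)u) − [x, σ(u)] for all x ∈ h, u ∈ m. -/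
/-- With `ρ(x)u = P_m ⁅x,u⁆` and `φ(x,u) = P_h ⁅x,u⁆` for a vector space
complement `m` to the subalgebra `h ⊆ g`, the following are equivalent:
(i) there exists an `h`-invariant (reductive) complement `m̃` to `h` in `g`;
(ii) `φ` is a coboundary: `φ(x,u) = σ(ρ(x)u) − [x, σ(u)]` for some linear `σ : m → h`. -/
theorem reductive_complement_iff_coboundary
    {k : Type*} [Field k] {g : Type*} [LieRing g] [LieAlgebra k g]
    [FiniteDimensional k g]
    (h : LieSubalgebra k g) (m : Submodule k g)
    (hc : IsCompl h.toSubmodule m)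
    (Ph : g →ₗ[k] h.toSubmodule) (Pm : g →ₗ[k] m)
    (hsum : ∀ z : g, (Ph z : g) + (Pm z : g) = z) :
    (∃ mt : Submodule k g, IsCompl h.toSubmodule mt ∧
        ∀ (x : h), ∀ v ∈ mt, ⁅(x : g), v⁆ ∈ mt) ↔
    (∃ σ : m →ₗ[k] h.toSubmodule, ∀ (x : h) (u : m),
        (Ph ⁅(x : g), (u : g)⁆ : g)
          = (σ (Pm ⁅(x : g), (u : g)⁆) : g) - ⁅(x : g), (σ u : g)⁆) := by
  have hmem0 : ∀ z : g, z ∈ h.toSubmodule → z ∈ m → z = 0 := fun z hz1 hz2 =>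
    (Submodule.disjoint_def.mp hc.disjoint) z hz1 hz2
  constructor
  · rintro ⟨mt, hcm, hinv⟩
    set Qh := h.toSubmodule.projectionOnto mt hcm with hQh
    refine ⟨-(Qh ∘ₗ m.subtype), fun x u => ?_⟩
    -- w := u - Qh u lies in mt
    have hw : ((u : g) - (Qh (u : g) : g)) ∈ mt := by
      have hself := Submodule.projection_add_projection_eq_self hcm (u : g)
      have h2 : ((u : g) - (Qh (u : g) : g))
          = (mt.projectionOnto h.toSubmodule hcm.symm (u : g) : g) :=
        sub_eq_of_eq_add' hself.symm
      rw [h2]; exact (mt.projectionOnto h.toSubmodule hcm.symm (u : g)).2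
    have hb : ⁅(x : g), (u : g) - (Qh (u : g) : g)⁆ ∈ mt := hinv x _ hw
    have hQb : (Qh ⁅(x : g), (u : g) - (Qh (u : g) : g)⁆ : g) = 0 := by
      rw [Submodule.projectionOnto_apply_of_mem_right hcm hb]
      simp
    -- expand the bracket
    have hexp : ⁅(x : g), (u : g) - (Qh (u : g) : g)⁆
        = (Ph ⁅(x : g), (u : g)⁆ : g) + (Pm ⁅(x : g), (u : g)⁆ : g)
          - ⁅(x : g), (Qh (u : g) : g)⁆ := by
      rw [hsum ⁅(x : g), (u : g)⁆]
      rw [lie_sub]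
    -- apply Qh to both sides
    have hQPh : (Qh ((Ph ⁅(x : g), (u : g)⁆ : g)) : g) = (Ph ⁅(x : g), (u : g)⁆ : g) := by
      have := Submodule.linearProjOfIsCompl_apply_left hcm (Ph ⁅(x : g), (u : g)⁆)
      exact congrArg _ this
    have hlie_mem : ⁅(x : g), (Qh (u : g) : g)⁆ ∈ h.toSubmodule :=
      h.lie_mem x.2 (Qh (u : g)).2
    have hQlie : (Qh ⁅(x : g), (Qh (u : g) : g)⁆ : g) = ⁅(x : g), (Qh (u : g) : g)⁆ := by
      have := Submodule.linearProjOfIsCompl_apply_left hcm ⟨_, hlie_mem⟩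
      have h2 := congrArg (Subtype.val) this
      exact h2
    have hmain : (0 : g) = (Ph ⁅(x : g), (u : g)⁆ : g)
        + (Qh ((Pm ⁅(x : g), (u : g)⁆ : g)) : g) - ⁅(x : g), (Qh (u : g) : g)⁆ := by
      rw [← hQb, hexp]
      rw [map_sub, map_add]
      push_cast
      rw [hQPh, hQlie]
    have hσu : ((-(Qh ∘ₗ m.subtype)) u : g) = -(Qh (u : g) : g) := rfl
    have hσρ : ((-(Qh ∘ₗ m.subtype)) (Pm ⁅(x : g), (u : g)⁆) : g)
        = -(Qh ((Pm ⁅(x : g), (u : g)⁆ : g)) : g) := rfl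
    have hgoal : (Ph ⁅(x : g), (u : g)⁆ : g)
        = ⁅(x : g), (Qh (u : g) : g)⁆ - (Qh ((Pm ⁅(x : g), (u : g)⁆ : g)) : g) := by
      apply sub_eq_zero.mp
      calc (Ph ⁅(x : g), (u : g)⁆ : g)
            - (⁅(x : g), (Qh (u : g) : g)⁆ - (Qh ((Pm ⁅(x : g), (u : g)⁆ : g)) : g))
          = (Ph ⁅(x : g), (u : g)⁆ : g) + (Qh ((Pm ⁅(x : g), (u : g)⁆ : g)) : g)
            - ⁅(x : g), (Qh (u : g) : g)⁆ := by abel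
        _ = 0 := hmain.symm
    rw [hσρ, hσu, lie_neg, hgoal]
    abel
  · rintro ⟨σ, hσ⟩
    set f : m →ₗ[k] g := m.subtype + h.toSubmodule.subtype ∘ₗ σ with hf
    have hfu : ∀ u : m, f u = (u : g) + (σ u : g) := fun u => rfl
    refine ⟨LinearMap.range f, ⟨?_, ?_⟩, ?_⟩
    · -- disjoint
      rw [Submodule.disjoint_def]
      rintro z hz ⟨u, rfl⟩
      have hu0 : (u : g) = 0 := by
        apply hmem0
        · have : (u : g) = f u - (σ u : g) := by rw [hfu]; abel
          rw [this]
          exact Submodule.sub_mem _ hz (σ u).2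
        · exact u.2
      have : u = 0 := Subtype.ext hu0
      rw [this, map_zero]
    · -- codisjoint
      rw [codisjoint_iff, eq_top_iff]
      intro z _
      rw [Submodule.mem_sup]
      refine ⟨(Ph z : g) - (σ (Pm z) : g), ?_, f (Pm z), ⟨Pm z, rfl⟩, ?_⟩
      · exact Submodule.sub_mem _ (Ph z).2 (σ (Pm z)).2
      · rw [hfu]
        calc (Ph z : g) - (σ (Pm z) : g) + ((Pm z : g) + (σ (Pm z) : g))
            = (Ph z : g) + (Pm z : g) := by abel
          _ = z := hsum z
    · -- invariance
      rintro x v ⟨u, rfl⟩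
      refine ⟨Pm ⁅(x : g), (u : g)⁆, ?_⟩
      rw [hfu, hfu]
      have hkey := hσ x u
      have hs := hsum ⁅(x : g), (u : g)⁆
      rw [lie_add]
      symm
      calc ⁅(x : g), (u : g)⁆ + ⁅(x : g), (σ u : g)⁆
          = ((Ph ⁅(x : g), (u : g)⁆ : g) + (Pm ⁅(x : g), (u : g)⁆ : g))
            + ⁅(x : g), (σ u : g)⁆ := by rw [hs]
        _ = (((σ (Pm ⁅(x : g), (u : g)⁆) : g) - ⁅(x : g), (σ u : g)⁆)
            + (Pm ⁅(x : g), (u : g)⁆ : g)) + ⁅(x : g), (σ u : g)⁆ := by rw [hkey]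
        _ = (Pm ⁅(x : g), (u : g)⁆ : g) + (σ (Pm ⁅(x : g), (u : g)⁆) : g) := by abel
end

section
/- Let k be a field, h a finite-dimensional Lie algebra over k, and M a finite-dimensional Lie module over h with action (x,u) ↦ x·u. For a linear map σ : M → h define dσ(x)(u) = [x, σ(u)] − σ(x·u) and δσ(u₁,u₂) = σ(u₁)·u₂ − σ(u₂)·u₁. Then for all x ∈ h and u₁, u₂ ∈ M: dσ(x)(u₁)·u₂ − dσ(x)(u₂)·u₁ = x·(δσ(u₁,u₂)) − δσ(x·u₁, u₂) − δσ(u₁, x·u₂); i.e. δ(dσ) = d(δσ), where δ is the operator induced by the module action and d is the Chevalley–Eilenberg differential. -/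
section

variable {L M : Type*} [LieRing L] [AddCommGroup M] [LieRingModule L M]

/-- `lieDiff σ` and `actionDelta σ` are the paper's `dσ` and `δσ`. -/
def lieDiff (σ : M → L) (x : L) (u : M) : L := ⁅x, σ u⁆ - σ ⁅x, u⁆

def actionDelta (σ : M → L) (u₁ u₂ : M) : M := ⁅σ u₁, u₂⁆ - ⁅σ u₂, u₁⁆

/- `x` acts as a derivation of the action `L × M → M`, so `⁅x, σ u⁆` acting on `v`
splits into two terms. -/
theorem lieDiff_lie (σ : M → L) (x : L) (u v : M) :
    ⁅lieDiff σ x u, v⁆ = ⁅x, ⁅σ u, v⁆⁆ - ⁅σ u, ⁅x, v⁆⁆ - ⁅σ ⁅x, u⁆, v⁆ := by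
  rw [lieDiff, sub_lie, lie_lie]

theorem actionDelta_lieDiff (σ : M → L) (x : L) (u₁ u₂ : M) :
    actionDelta (lieDiff σ x) u₁ u₂
      = ⁅x, actionDelta σ u₁ u₂⁆ - actionDelta σ ⁅x, u₁⁆ u₂ - actionDelta σ u₁ ⁅x, u₂⁆ := by
  simp only [actionDelta, lieDiff_lie, lie_sub]
  abel

end

theorem delta_d_commute_on_zero_cochains_general
    {k : Type*} [Field k] {h : Type*} [LieRing h] [LieAlgebra k h]
    {M : Type*} [AddCommGroup M] [Module k M] [LieRingModule h M]
    (σ : M →ₗ[k] h)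
    (dσ : h → M → h) (hdσ : ∀ (x : h) (u : M), dσ x u = ⁅x, σ u⁆ - σ ⁅x, u⁆)
    (δσ : M → M → M) (hδσ : ∀ u₁ u₂ : M, δσ u₁ u₂ = ⁅σ u₁, u₂⁆ - ⁅σ u₂, u₁⁆) :
    ∀ (x : h) (u₁ u₂ : M),
      ⁅dσ x u₁, u₂⁆ - ⁅dσ x u₂, u₁⁆
        = ⁅x, δσ u₁ u₂⁆ - δσ ⁅x, u₁⁆ u₂ - δσ u₁ ⁅x, u₂⁆ := by
  obtain rfl : dσ = lieDiff σ := funext₂ hdσ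
  obtain rfl : δσ = actionDelta σ := funext₂ hδσ
  exact actionDelta_lieDiff σ

/-- For a finite-dimensional Lie module `M` over a finite-dimensional Lie
algebra `h`, a linear map `σ : M → h`, with `dσ(x)(u) = [x, σu] − σ(x·u)` and
`δσ(u₁,u₂) = σ(u₁)·u₂ − σ(u₂)·u₁`, one has `δ(dσ) = d(δσ)`:
`dσ(x)(u₁)·u₂ − dσ(x)(u₂)·u₁ = x·δσ(u₁,u₂) − δσ(x·u₁,u₂) − δσ(u₁,x·u₂)`. -/
theorem delta_d_commute_on_zero_cochains
    {k : Type*} [Field k] {h : Type*} [LieRing h] [LieAlgebra k h]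
    [FiniteDimensional k h]
    {M : Type*} [AddCommGroup M] [Module k M] [LieRingModule h M] [LieModule k h M]
    [FiniteDimensional k M]
    (σ : M →ₗ[k] h)
    (dσ : h → M → h) (hdσ : ∀ (x : h) (u : M), dσ x u = ⁅x, σ u⁆ - σ ⁅x, u⁆)
    (δσ : M → M → M) (hδσ : ∀ u₁ u₂ : M, δσ u₁ u₂ = ⁅σ u₁, u₂⁆ - ⁅σ u₂, u₁⁆) :
    ∀ (x : h) (u₁ u₂ : M),
      ⁅dσ x u₁, u₂⁆ - ⁅dσ x u₂, u₁⁆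
        = ⁅x, δσ u₁ u₂⁆ - δσ ⁅x, u₁⁆ u₂ - δσ u₁ ⁅x, u₂⁆ :=
  delta_d_commute_on_zero_cochains_general σ dσ hdσ δσ hδσ
end

section
/- Let k be a field, h a finite-dimensional Lie algebra over k, and M a finite-dimensional Lie module over h with action (x,u) ↦ x·u. Let φ : h × M → h be bilinear and a 1-cocycle: [x, φ(y,u)] + φ(x, y·u) − [y, φ(x,u)] − φ(y, x·u) − φ([x,y], u) = 0 for all x,y ∈ h, u ∈ M. Define δφ(x)(u₁,u₂) = φ(x,u₁)·u₂ − φ(x,u₂)·u₁ ∈ M. Then δφ is a closed 1-cochain with values in Λ²M*⊗M: for all x,y ∈ h and u₁,u₂ ∈ M, [x·(δφ(y)(u₁,u₂)) − δφ(y)(x·u₁,u₂) − δφ(y)(u₁,x·u₂)] − [y·(δφ(x)(u₁,u₂)) − δφ(x)(y·u₁,u₂) − δφ(x)(u₁,y·u₂)] − δφ([x,y])(u₁,u₂) = 0. -/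
/-!
Both cochain differentials below are the Chevalley–Eilenberg differential of a 1-cochain, and
`δ` commutes with them: expanding with the Jacobi identity `⁅⁅x, y⁆, m⁆ = ⁅x, ⁅y, m⁆⁆ - ⁅y, ⁅x, m⁆⁆`
gives `d (δ φ) = δ (d φ)` for every `φ`, so a cocycle `φ` has a closed `δ φ`.
-/

namespace LieCochain

variable {h M : Type*} [LieRing h] [AddCommGroup M] [LieRingModule h M]

/-- The differential of a 1-cochain `φ ∈ h* ⊗ M* ⊗ h`. -/
def dHom (φ : h → M → h) (x y : h) (u : M) : h :=
  ⁅x, φ y u⁆ + φ x ⁅y, u⁆ - ⁅y, φ x u⁆ - φ y ⁅x, u⁆ - φ ⁅x, y⁆ u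

/-- The differential of a 1-cochain `ψ ∈ h* ⊗ Λ²M* ⊗ M`. -/
def dAlt (ψ : h → M → M → M) (x y : h) (u₁ u₂ : M) : M :=
  (⁅x, ψ y u₁ u₂⁆ - ψ y ⁅x, u₁⁆ u₂ - ψ y u₁ ⁅x, u₂⁆)
    - (⁅y, ψ x u₁ u₂⁆ - ψ x ⁅y, u₁⁆ u₂ - ψ x u₁ ⁅y, u₂⁆)
    - ψ ⁅x, y⁆ u₁ u₂

def delta (φ : h → M → h) (x : h) (u₁ u₂ : M) : M :=
  ⁅φ x u₁, u₂⁆ - ⁅φ x u₂, u₁⁆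

theorem dAlt_delta (φ : h → M → h) (x y : h) (u₁ u₂ : M) :
    dAlt (delta φ) x y u₁ u₂ = ⁅dHom φ x y u₁, u₂⁆ - ⁅dHom φ x y u₂, u₁⁆ := by
  simp only [dAlt, dHom, delta, lie_sub, sub_lie, add_lie, lie_lie]
  abel

theorem dAlt_delta_eq_zero {φ : h → M → h} (hφ : ∀ x y u, dHom φ x y u = 0) (x y : h)
    (u₁ u₂ : M) : dAlt (delta φ) x y u₁ u₂ = 0 := by
  rw [dAlt_delta, hφ, hφ, zero_lie, zero_lie, sub_zero]

end LieCochain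

open LieCochain in
theorem delta_phi_is_closed_general
    {k : Type*} [Field k] {h : Type*} [LieRing h] [LieAlgebra k h]
    {M : Type*} [AddCommGroup M] [Module k M] [LieRingModule h M]
    (φ : h →ₗ[k] M →ₗ[k] h)
    (hcocycle : ∀ (x y : h) (u : M),
      ⁅x, φ y u⁆ + φ x ⁅y, u⁆ - ⁅y, φ x u⁆ - φ y ⁅x, u⁆ - φ ⁅x, y⁆ u = 0)
    (δφ : h → M → M → M)
    (hδφ : ∀ (x : h) (u₁ u₂ : M), δφ x u₁ u₂ = ⁅φ x u₁, u₂⁆ - ⁅φ x u₂, u₁⁆) :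
    ∀ (x y : h) (u₁ u₂ : M),
      (⁅x, δφ y u₁ u₂⁆ - δφ y ⁅x, u₁⁆ u₂ - δφ y u₁ ⁅x, u₂⁆)
        - (⁅y, δφ x u₁ u₂⁆ - δφ x ⁅y, u₁⁆ u₂ - δφ x u₁ ⁅y, u₂⁆)
        - δφ ⁅x, y⁆ u₁ u₂ = 0 := by
  obtain rfl : δφ = delta (fun x u ↦ φ x u) := funext fun x ↦ funext fun u₁ ↦ funext (hδφ x u₁)
  exact dAlt_delta_eq_zero hcocycle

/-- If `φ : h × M → h` is a bilinear 1-cocycle, then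
`δφ(x)(u₁,u₂) = φ(x,u₁)·u₂ − φ(x,u₂)·u₁` is a closed 1-cochain with values in `Λ²M*⊗M`. -/
theorem delta_phi_is_closed
    {k : Type*} [Field k] {h : Type*} [LieRing h] [LieAlgebra k h]
    [FiniteDimensional k h]
    {M : Type*} [AddCommGroup M] [Module k M] [LieRingModule h M] [LieModule k h M]
    [FiniteDimensional k M]
    (φ : h →ₗ[k] M →ₗ[k] h)
    (hcocycle : ∀ (x y : h) (u : M),
      ⁅x, φ y u⁆ + φ x ⁅y, u⁆ - ⁅y, φ x u⁆ - φ y ⁅x, u⁆ - φ ⁅x, y⁆ u = 0)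
    (δφ : h → M → M → M)
    (hδφ : ∀ (x : h) (u₁ u₂ : M), δφ x u₁ u₂ = ⁅φ x u₁, u₂⁆ - ⁅φ x u₂, u₁⁆) :
    ∀ (x y : h) (u₁ u₂ : M),
      (⁅x, δφ y u₁ u₂⁆ - δφ y ⁅x, u₁⁆ u₂ - δφ y u₁ ⁅x, u₂⁆)
        - (⁅y, δφ x u₁ u₂⁆ - δφ x ⁅y, u₁⁆ u₂ - δφ x u₁ ⁅y, u₂⁆)
        - δφ ⁅x, y⁆ u₁ u₂ = 0 :=
  delta_phi_is_closed_general φ hcocycle δφ hδφ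
end

section
/- Let k be a field, h a finite-dimensional Lie algebra over k, and M a finite-dimensional Lie module over h with action (x,u) ↦ x·u. Let φ : h × M → h be bilinear and a 1-cocycle: [x, φ(y,u)] + φ(x, y·u) − [y, φ(x,u)] − φ(y, x·u) − φ([x,y], u) = 0 for all x,y,u. Let θ_m : M × M → M be an alternating bilinear map with δφ = dθ_m, i.e. φ(x,u₁)·u₂ − φ(x,u₂)·u₁ = x·θ_m(u₁,u₂) − θ_m(x·u₁,u₂) − θ_m(u₁,x·u₂) for all x,u₁,u₂. Define Qφ(x)(u₁,u₂) = φ(φ(x,u₁),u₂) − φ(φ(x,u₂),u₁) − φ(x, θ_m(u₁,u₂)) ∈ h. Then Qφ is closed: for all x,y ∈ h and u₁,u₂ ∈ M, [[x, Qφ(y)(u₁,u₂)] − Qφ(y)(x·u₁,u₂) − Qφ(y)(u₁,x·u₂)] − [[y, Qφ(x)(u₁,u₂)] − Qφ(x)(y·u₁,u₂) − Qφ(x)(u₁,y·u₂)] − Qφ([x,y])(u₁,u₂) = 0. -/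
/-!
Expanding `dQφ(x, y)(u₁, u₂)` and regrouping, every term is a value of `dφ`
(at `(x, y)`, at `(x, φ(y, uᵢ))`, at `(y, φ(x, uᵢ))`), or `φ` applied to a value of
`δφ − dθ_m`, except for the brackets `[φ(x, uᵢ), φ(y, uⱼ)]`, which cancel in pairs by
antisymmetry. Hence `dQφ` vanishes when `dφ = 0` and `δφ = dθ_m`.
-/

section QuadraticOperator

variable {R L M : Type*} [CommRing R] [LieRing L] [LieAlgebra R L]
  [AddCommGroup M] [Module R M] [LieRingModule L M]

/-- `(dφ)(x, y)(u)`. -/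
def cocycleDefect (φ : L →ₗ[R] M →ₗ[R] L) (x y : L) (u : M) : L :=
  ⁅x, φ y u⁆ + φ x ⁅y, u⁆ - ⁅y, φ x u⁆ - φ y ⁅x, u⁆ - φ ⁅x, y⁆ u

/-- `(δφ − dθ)(x)(u₁, u₂)`. -/
def deltaSubDiff (φ : L →ₗ[R] M →ₗ[R] L) (θ : M →ₗ[R] M →ₗ[R] M) (x : L) (u₁ u₂ : M) : M :=
  (⁅φ x u₁, u₂⁆ - ⁅φ x u₂, u₁⁆) - (⁅x, θ u₁ u₂⁆ - θ ⁅x, u₁⁆ u₂ - θ u₁ ⁅x, u₂⁆)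

def quadraticOperator (φ : L →ₗ[R] M →ₗ[R] L) (θ : M →ₗ[R] M →ₗ[R] M)
    (x : L) (u₁ u₂ : M) : L :=
  φ (φ x u₁) u₂ - φ (φ x u₂) u₁ - φ x (θ u₁ u₂)

/-- The Chevalley–Eilenberg differential of a 1-cochain with values in `Λ²M* ⊗ L`. -/
def coboundary (Q : L → M → M → L) (x y : L) (u₁ u₂ : M) : L :=
  (⁅x, Q y u₁ u₂⁆ - Q y ⁅x, u₁⁆ u₂ - Q y u₁ ⁅x, u₂⁆)
    - (⁅y, Q x u₁ u₂⁆ - Q x ⁅y, u₁⁆ u₂ - Q x u₁ ⁅y, u₂⁆)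
    - Q ⁅x, y⁆ u₁ u₂

theorem coboundary_quadraticOperator (φ : L →ₗ[R] M →ₗ[R] L) (θ : M →ₗ[R] M →ₗ[R] M)
    (x y : L) (u₁ u₂ : M) :
    coboundary (quadraticOperator φ θ) x y u₁ u₂ =
      - cocycleDefect φ x y (θ u₁ u₂)
        + cocycleDefect φ x (φ y u₁) u₂ - cocycleDefect φ x (φ y u₂) u₁
        - cocycleDefect φ y (φ x u₁) u₂ + cocycleDefect φ y (φ x u₂) u₁
        - φ x (deltaSubDiff φ θ y u₁ u₂) + φ y (deltaSubDiff φ θ x u₁ u₂)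
        + φ (cocycleDefect φ x y u₁) u₂ - φ (cocycleDefect φ x y u₂) u₁ := by
  simp only [coboundary, quadraticOperator, cocycleDefect, deltaSubDiff, map_add, map_sub,
    LinearMap.add_apply, LinearMap.sub_apply, lie_sub,
    ← lie_skew (φ x u₁) (φ y u₂), ← lie_skew (φ x u₂) (φ y u₁)]
  abel

end QuadraticOperator

theorem Q_phi_is_closed_general
    {k : Type*} [Field k] {h : Type*} [LieRing h] [LieAlgebra k h]
    {M : Type*} [AddCommGroup M] [Module k M] [LieRingModule h M]
    (φ : h →ₗ[k] M →ₗ[k] h)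
    (hcocycle : ∀ (x y : h) (u : M),
      ⁅x, φ y u⁆ + φ x ⁅y, u⁆ - ⁅y, φ x u⁆ - φ y ⁅x, u⁆ - φ ⁅x, y⁆ u = 0)
    (θm : M →ₗ[k] M →ₗ[k] M)
    (hδφ : ∀ (x : h) (u₁ u₂ : M),
      ⁅φ x u₁, u₂⁆ - ⁅φ x u₂, u₁⁆
        = ⁅x, θm u₁ u₂⁆ - θm ⁅x, u₁⁆ u₂ - θm u₁ ⁅x, u₂⁆)
    (Qφ : h → M → M → h)
    (hQφ : ∀ (x : h) (u₁ u₂ : M),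
      Qφ x u₁ u₂ = φ (φ x u₁) u₂ - φ (φ x u₂) u₁ - φ x (θm u₁ u₂)) :
    ∀ (x y : h) (u₁ u₂ : M),
      (⁅x, Qφ y u₁ u₂⁆ - Qφ y ⁅x, u₁⁆ u₂ - Qφ y u₁ ⁅x, u₂⁆)
        - (⁅y, Qφ x u₁ u₂⁆ - Qφ x ⁅y, u₁⁆ u₂ - Qφ x u₁ ⁅y, u₂⁆)
        - Qφ ⁅x, y⁆ u₁ u₂ = 0 := by
  intro x y u₁ u₂
  obtain rfl : Qφ = quadraticOperator φ θm := funext fun x => funext fun u₁ => funext (hQφ x u₁)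
  have hdφ : ∀ x y u, cocycleDefect φ x y u = 0 := hcocycle
  have hδ : ∀ x u₁ u₂, deltaSubDiff φ θm x u₁ u₂ = 0 := fun x u₁ u₂ =>
    sub_eq_zero.mpr (hδφ x u₁ u₂)
  change coboundary (quadraticOperator φ θm) x y u₁ u₂ = 0
  simp [coboundary_quadraticOperator, hdφ, hδ]

/-- Lemma L1: If `φ` is a 1-cocycle and `θ_m` is alternating with
`δφ = dθ_m`, then `Qφ(x)(u₁,u₂) = φ(φ(x,u₁),u₂) − φ(φ(x,u₂),u₁) − φ(x,θ_m(u₁,u₂))`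
is a closed 1-cochain with values in `Λ²M*⊗h`. -/
theorem Q_phi_is_closed
    {k : Type*} [Field k] {h : Type*} [LieRing h] [LieAlgebra k h]
    [FiniteDimensional k h]
    {M : Type*} [AddCommGroup M] [Module k M] [LieRingModule h M] [LieModule k h M]
    [FiniteDimensional k M]
    (φ : h →ₗ[k] M →ₗ[k] h)
    (hcocycle : ∀ (x y : h) (u : M),
      ⁅x, φ y u⁆ + φ x ⁅y, u⁆ - ⁅y, φ x u⁆ - φ y ⁅x, u⁆ - φ ⁅x, y⁆ u = 0)
    (θm : M →ₗ[k] M →ₗ[k] M)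
    (halt : ∀ u : M, θm u u = 0)
    (hδφ : ∀ (x : h) (u₁ u₂ : M),
      ⁅φ x u₁, u₂⁆ - ⁅φ x u₂, u₁⁆
        = ⁅x, θm u₁ u₂⁆ - θm ⁅x, u₁⁆ u₂ - θm u₁ ⁅x, u₂⁆)
    (Qφ : h → M → M → h)
    (hQφ : ∀ (x : h) (u₁ u₂ : M),
      Qφ x u₁ u₂ = φ (φ x u₁) u₂ - φ (φ x u₂) u₁ - φ x (θm u₁ u₂)) :
    ∀ (x y : h) (u₁ u₂ : M),
      (⁅x, Qφ y u₁ u₂⁆ - Qφ y ⁅x, u₁⁆ u₂ - Qφ y u₁ ⁅x, u₂⁆)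
        - (⁅y, Qφ x u₁ u₂⁆ - Qφ x ⁅y, u₁⁆ u₂ - Qφ x u₁ ⁅y, u₂⁆)
        - Qφ ⁅x, y⁆ u₁ u₂ = 0 :=
  Q_phi_is_closed_general φ hcocycle θm hδφ Qφ hQφ
end

section
/- Let k be a field, h a finite-dimensional Lie algebra over k, and M a finite-dimensional Lie module over h with action (x,u) ↦ x·u. Let φ : h × M → h be bilinear and a 1-cocycle: [x, φ(y,u)] + φ(x, y·u) − [y, φ(x,u)] − φ(y, x·u) − φ([x,y], u) = 0, and let θ_m : M × M → M be an alternating bilinear map with φ(x,u₁)·u₂ − φ(x,u₂)·u₁ = x·θ_m(u₁,u₂) − θ_m(x·u₁,u₂) − θ_m(u₁,x·u₂) for all x,u₁,u₂. Let σ : M → h be linear, and set dσ(x,u) = [x,σ(u)] − σ(x·u) and δσ(u₁,u₂) = σ(u₁)·u₂ − σ(u₂)·u₁. Define q_σ(x)(u₁,u₂) = dσ(φ(x,u₁),u₂) − dσ(φ(x,u₂),u₁) + φ(dσ(x,u₁),u₂) − φ(dσ(x,u₂),u₁) + dσ(dσ(x,u₁),u₂) − dσ(dσ(x,u₂),u₁)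 − φ(x, δσ(u₁,u₂)) − dσ(x, θ_m(u₁,u₂)) − dσ(x, δσ(u₁,u₂)), and define Φ : M × M → h by Φ(u₁,u₂) = [φ(σ(u₁),u₂) − φ(σ(u₂),u₁)] + [σ(u₁),σ(u₂)] − σ(σ(u₁)·u₂ − σ(u₂)·u₁) − σ(θ_m(u₁,u₂)). Then q_σ is the coboundary of Φ: for all x ∈ h and u₁,u₂ ∈ M, q_σ(x)(u₁,u₂) = [x, Φ(u₁,u₂)] − Φ(x·u₁, u₂) − Φ(u₁, x·u₂). -/
/-!
`Φ` is built from `σ`, `φ` and `θ_m` by brackets, the action and composition, and `d` satisfies a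
Leibniz rule for each of these, so `dΦ` can be computed term by term: the cocycle identity of `φ`
rewrites `dφ₁`, the relation `δφ = dθ_m` rewrites the `σ ∘ dθ_m` part of `dφ₄`, and `dφ₃` involves
`d(δσ) = δ(dσ)`. Once `dσ (φ x u) v` and `dσ (dσ x u) v` are expanded in `q_σ`, the two sides
differ only by antisymmetry of the bracket.
-/

namespace LieCochain

variable {L M N P : Type*} [LieRing L] [AddCommGroup M] [LieRingModule L M]
  [AddCommGroup N] [LieRingModule L N] [AddCommGroup P] [LieRingModule L P]

/-- `d₁ τ` and `d₂ Ψ` are the Chevalley–Eilenberg differentials of `τ` and `Ψ` seen as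
0-cochains with values in the `L`-modules `Hom(M, N)` and `Hom(M ⊗ M, N)`. -/
def d₁ (τ : M → N) (x : L) (u : M) : N := ⁅x, τ u⁆ - τ ⁅x, u⁆

def d₂ (Ψ : M → M → N) (x : L) (u₁ u₂ : M) : N :=
  ⁅x, Ψ u₁ u₂⁆ - Ψ ⁅x, u₁⁆ u₂ - Ψ u₁ ⁅x, u₂⁆

def δ (τ : M → L) (u₁ u₂ : M) : M := ⁅τ u₁, u₂⁆ - ⁅τ u₂, u₁⁆

lemma d₂_add (Ψ₁ Ψ₂ : M → M → N) (x : L) (u₁ u₂ : M) :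
    d₂ (Ψ₁ + Ψ₂) x u₁ u₂ = d₂ Ψ₁ x u₁ u₂ + d₂ Ψ₂ x u₁ u₂ := by
  simp only [d₂, Pi.add_apply, lie_add]
  abel

lemma d₂_sub (Ψ₁ Ψ₂ : M → M → N) (x : L) (u₁ u₂ : M) :
    d₂ (Ψ₁ - Ψ₂) x u₁ u₂ = d₂ Ψ₁ x u₁ u₂ - d₂ Ψ₂ x u₁ u₂ := by
  simp only [d₂, Pi.sub_apply, lie_sub]
  abel

lemma d₂_comp {F : Type*} [FunLike F P N] [AddMonoidHomClass F P N] (σ : F)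
    (Ψ : M → M → P) (x : L) (u₁ u₂ : M) :
    d₂ (fun u₁ u₂ ↦ σ (Ψ u₁ u₂)) x u₁ u₂ = d₁ σ x (Ψ u₁ u₂) + σ (d₂ Ψ x u₁ u₂) := by
  simp only [d₁, d₂, map_sub]
  abel

lemma d₂_lie (τ : M → L) (x : L) (u₁ u₂ : M) :
    d₂ (fun u₁ u₂ ↦ ⁅τ u₁, τ u₂⁆) x u₁ u₂ = ⁅d₁ τ x u₁, τ u₂⁆ + ⁅τ u₁, d₁ τ x u₂⁆ := by
  simp only [d₁, d₂, lie_lie, sub_lie, lie_sub]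
  abel

lemma d₂_δ (τ : M → L) (x : L) (u₁ u₂ : M) :
    d₂ (δ τ) x u₁ u₂ = δ (d₁ τ x) u₁ u₂ := by
  simp only [d₁, d₂, δ, lie_lie, sub_lie, lie_sub]
  abel

lemma d₂_cocycle_comp_sub_swap {R : Type*} [CommRing R] [Module R L] [Module R M]
    (φ : L →ₗ[R] M →ₗ[R] L)
    (hφ : ∀ (x y : L) (u : M),
      ⁅x, φ y u⁆ + φ x ⁅y, u⁆ - ⁅y, φ x u⁆ - φ y ⁅x, u⁆ - φ ⁅x, y⁆ u = 0)
    (τ : M → L) (x : L) (u₁ u₂ : M) :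
    d₂ (fun u₁ u₂ ↦ φ (τ u₁) u₂ - φ (τ u₂) u₁) x u₁ u₂
      = ⁅τ u₁, φ x u₂⁆ - ⁅τ u₂, φ x u₁⁆ - φ x (δ τ u₁ u₂)
        + φ (d₁ τ x u₁) u₂ - φ (d₁ τ x u₂) u₁ := by
  simp only [d₁, d₂, δ, map_sub, LinearMap.sub_apply, lie_sub]
  linear_combination (norm := abel) hφ x (τ u₁) u₂ - hφ x (τ u₂) u₁

end LieCochain

open LieCochain

theorem q_sigma_is_coboundary_general
    {k : Type*} [Field k] {h : Type*} [LieRing h] [LieAlgebra k h]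
    {M : Type*} [AddCommGroup M] [Module k M] [LieRingModule h M]
    (φ : h →ₗ[k] M →ₗ[k] h)
    (hcocycle : ∀ (x y : h) (u : M),
      ⁅x, φ y u⁆ + φ x ⁅y, u⁆ - ⁅y, φ x u⁆ - φ y ⁅x, u⁆ - φ ⁅x, y⁆ u = 0)
    (θm : M →ₗ[k] M →ₗ[k] M)
    (hδφ : ∀ (x : h) (u₁ u₂ : M),
      ⁅φ x u₁, u₂⁆ - ⁅φ x u₂, u₁⁆
        = ⁅x, θm u₁ u₂⁆ - θm ⁅x, u₁⁆ u₂ - θm u₁ ⁅x, u₂⁆)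
    (σ : M →ₗ[k] h)
    (dσ : h → M → h) (hdσ : ∀ (x : h) (u : M), dσ x u = ⁅x, σ u⁆ - σ ⁅x, u⁆)
    (δσ : M → M → M) (hδσ : ∀ u₁ u₂ : M, δσ u₁ u₂ = ⁅σ u₁, u₂⁆ - ⁅σ u₂, u₁⁆)
    (qσ : h → M → M → h)
    (hqσ : ∀ (x : h) (u₁ u₂ : M),
      qσ x u₁ u₂ =
        dσ (φ x u₁) u₂ - dσ (φ x u₂) u₁
          + φ (dσ x u₁) u₂ - φ (dσ x u₂) u₁
          + dσ (dσ x u₁) u₂ - dσ (dσ x u₂) u₁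
          - φ x (δσ u₁ u₂) - dσ x (θm u₁ u₂) - dσ x (δσ u₁ u₂))
    (Φ : M → M → h)
    (hΦ : ∀ u₁ u₂ : M,
      Φ u₁ u₂ = (φ (σ u₁) u₂ - φ (σ u₂) u₁) + ⁅σ u₁, σ u₂⁆
        - σ (⁅σ u₁, u₂⁆ - ⁅σ u₂, u₁⁆) - σ (θm u₁ u₂)) :
    ∀ (x : h) (u₁ u₂ : M),
      qσ x u₁ u₂ = ⁅x, Φ u₁ u₂⁆ - Φ ⁅x, u₁⁆ u₂ - Φ u₁ ⁅x, u₂⁆ := by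
  obtain rfl : dσ = d₁ σ := funext₂ hdσ
  obtain rfl : δσ = δ σ := funext₂ hδσ
  have hΦ' : Φ = (fun u₁ u₂ ↦ φ (σ u₁) u₂ - φ (σ u₂) u₁) + (fun u₁ u₂ ↦ ⁅σ u₁, σ u₂⁆)
      - (fun u₁ u₂ ↦ σ (δ σ u₁ u₂)) - (fun u₁ u₂ ↦ σ (θm u₁ u₂)) := funext₂ hΦ
  have hθ : ∀ x u₁ u₂, δ (φ x) u₁ u₂ = d₂ (fun u₁ u₂ ↦ θm u₁ u₂) x u₁ u₂ := hδφ
  intro x u₁ u₂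
  change _ = d₂ Φ x u₁ u₂
  rw [hqσ, hΦ', d₂_sub, d₂_sub, d₂_add, d₂_cocycle_comp_sub_swap φ hcocycle, d₂_lie,
    d₂_comp, d₂_comp, d₂_δ, ← hθ]
  have hd₁ : ∀ (y : h) (v : M), d₁ σ y v = ⁅y, σ v⁆ - σ ⁅y, v⁆ := fun _ _ ↦ rfl
  rw [hd₁ (φ x u₁), hd₁ (φ x u₂), hd₁ (d₁ σ x u₁), hd₁ (d₁ σ x u₂)]
  simp only [δ, map_sub]
  rw [← lie_skew (σ u₁), ← lie_skew (σ u₂), ← lie_skew (σ u₁) (d₁ σ x u₂)]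
  abel

/-- second part of Lemma L2: With `φ` a 1-cocycle, `θ_m` alternating with
`δφ = dθ_m`, and `σ : M → h` linear, the 1-cochain `q_σ` is the coboundary of
`Φ = φ₁ + φ₂ − φ₃ − φ₄`: `q_σ(x)(u₁,u₂) = [x, Φ(u₁,u₂)] − Φ(x·u₁,u₂) − Φ(u₁,x·u₂)`. -/
theorem q_sigma_is_coboundary
    {k : Type*} [Field k] {h : Type*} [LieRing h] [LieAlgebra k h]
    [FiniteDimensional k h]
    {M : Type*} [AddCommGroup M] [Module k M] [LieRingModule h M] [LieModule k h M]
    [FiniteDimensional k M]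
    (φ : h →ₗ[k] M →ₗ[k] h)
    (hcocycle : ∀ (x y : h) (u : M),
      ⁅x, φ y u⁆ + φ x ⁅y, u⁆ - ⁅y, φ x u⁆ - φ y ⁅x, u⁆ - φ ⁅x, y⁆ u = 0)
    (θm : M →ₗ[k] M →ₗ[k] M)
    (halt : ∀ u : M, θm u u = 0)
    (hδφ : ∀ (x : h) (u₁ u₂ : M),
      ⁅φ x u₁, u₂⁆ - ⁅φ x u₂, u₁⁆
        = ⁅x, θm u₁ u₂⁆ - θm ⁅x, u₁⁆ u₂ - θm u₁ ⁅x, u₂⁆)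
    (σ : M →ₗ[k] h)
    (dσ : h → M → h) (hdσ : ∀ (x : h) (u : M), dσ x u = ⁅x, σ u⁆ - σ ⁅x, u⁆)
    (δσ : M → M → M) (hδσ : ∀ u₁ u₂ : M, δσ u₁ u₂ = ⁅σ u₁, u₂⁆ - ⁅σ u₂, u₁⁆)
    (qσ : h → M → M → h)
    (hqσ : ∀ (x : h) (u₁ u₂ : M),
      qσ x u₁ u₂ =
        dσ (φ x u₁) u₂ - dσ (φ x u₂) u₁
          + φ (dσ x u₁) u₂ - φ (dσ x u₂) u₁
          + dσ (dσ x u₁) u₂ - dσ (dσ x u₂) u₁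
          - φ x (δσ u₁ u₂) - dσ x (θm u₁ u₂) - dσ x (δσ u₁ u₂))
    (Φ : M → M → h)
    (hΦ : ∀ u₁ u₂ : M,
      Φ u₁ u₂ = (φ (σ u₁) u₂ - φ (σ u₂) u₁) + ⁅σ u₁, σ u₂⁆
        - σ (⁅σ u₁, u₂⁆ - ⁅σ u₂, u₁⁆) - σ (θm u₁ u₂)) :
    ∀ (x : h) (u₁ u₂ : M),
      qσ x u₁ u₂ = ⁅x, Φ u₁ u₂⁆ - Φ ⁅x, u₁⁆ u₂ - Φ u₁ ⁅x, u₂⁆ :=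
  q_sigma_is_coboundary_general φ hcocycle θm hδφ σ dσ hdσ δσ hδσ qσ hqσ Φ hΦ
end

section
/- Let k be a field, g a finite-dimensional Lie algebra over k, h ⊆ g a Lie subalgebra, m ⊆ g a linear subspace with g = h ⊕ m, projections P_h, P_m, and set ρ(x)u = P_m[x,u], φ(x,u) = P_h[x,u] for x ∈ h, u ∈ m, and θ_m(u,v) = P_m[u,v] for u,v ∈ m. Then δφ = dθ_m: for all x ∈ h and u₁, u₂ ∈ m, ρ(φ(x,u₁))u₂ − ρ(φ(x,u₂))u₁ = ρ(x)θ_m(u₁,u₂) − θ_m(ρ(x)u₁, u₂) − θ_m(u₁, ρ(x)u₂). -/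
/-! The Jacobi identity `⁅x, ⁅u₁, u₂⁆⁆ = ⁅⁅x, u₁⁆, u₂⁆ + ⁅u₁, ⁅x, u₂⁆⁆`, projected to `m`.
Since `h` is a subalgebra and `P_m` kills `h`, the `h`-part of `⁅u₁, u₂⁆` drops out of
`P_m⁅x, ⁅u₁, u₂⁆⁆`, and substituting `P_h⁅x, uᵢ⁆ = ⁅x, uᵢ⁆ - P_m⁅x, uᵢ⁆` on the left turns
the identity into `δφ = dθ_m`. -/

theorem Submodule.proj_eq_zero_of_mem_of_disjoint {R E : Type*} [Ring R] [AddCommGroup E]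
    [Module R E] {p q : Submodule R E} (hpq : Disjoint p q) (P : E → p) (Q : E → q)
    (hPQ : ∀ z, (P z : E) + (Q z : E) = z) {z : E} (hz : z ∈ p) : Q z = 0 := by
  have hQp : (Q z : E) ∈ p := by
    simpa only [eq_sub_of_add_eq' (hPQ z)] using p.sub_mem hz (P z).2
  exact Subtype.ext (Submodule.disjoint_def.mp hpq _ hQp (Q z).2)

section LieProjections

variable {R L : Type*} [CommRing R] [LieRing L] [LieAlgebra R L]
  {H : LieSubalgebra R L} {M : Submodule R L}
  (P : L →ₗ[R] H.toSubmodule) (Q : L →ₗ[R] M) (hPQ : ∀ z, (P z : L) + (Q z : L) = z)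

include hPQ in
theorem proj_lie_fst_proj (w v : L) : Q ⁅(P w : L), v⁆ = Q ⁅w, v⁆ - Q ⁅(Q w : L), v⁆ := by
  rw [eq_sub_iff_add_eq, ← map_add, ← add_lie, hPQ]

include hPQ in
theorem proj_lie_snd_proj_of_mem (hHM : Disjoint H.toSubmodule M) {x : L} (hx : x ∈ H)
    (w : L) : Q ⁅x, (Q w : L)⁆ = Q ⁅x, w⁆ := by
  have hvanish : Q ⁅x, (P w : L)⁆ = 0 :=
    Submodule.proj_eq_zero_of_mem_of_disjoint hHM P Q hPQ (H.lie_mem hx (P w).2)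
  conv_rhs => rw [← hPQ w, lie_add, map_add, hvanish, zero_add]

end LieProjections

theorem delta_phi_eq_d_theta_m_general
    {k : Type*} [Field k] {g : Type*} [LieRing g] [LieAlgebra k g]
    (h : LieSubalgebra k g) (m : Submodule k g)
    (hc : IsCompl h.toSubmodule m)
    (Ph : g →ₗ[k] h.toSubmodule) (Pm : g →ₗ[k] m)
    (hsum : ∀ z : g, (Ph z : g) + (Pm z : g) = z) :
    ∀ (x : h) (u₁ u₂ : m),
      Pm ⁅(Ph ⁅(x : g), (u₁ : g)⁆ : g), (u₂ : g)⁆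
          - Pm ⁅(Ph ⁅(x : g), (u₂ : g)⁆ : g), (u₁ : g)⁆
        = Pm ⁅(x : g), (Pm ⁅(u₁ : g), (u₂ : g)⁆ : g)⁆
          - Pm ⁅(Pm ⁅(x : g), (u₁ : g)⁆ : g), (u₂ : g)⁆
          - Pm ⁅(u₁ : g), (Pm ⁅(x : g), (u₂ : g)⁆ : g)⁆ := by
  intro x u₁ u₂
  rw [proj_lie_fst_proj Ph Pm hsum, proj_lie_fst_proj Ph Pm hsum,
    proj_lie_snd_proj_of_mem Ph Pm hsum hc.disjoint x.2, leibniz_lie, map_add,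
    ← lie_skew (u₁ : g) ⁅(x : g), (u₂ : g)⁆, ← lie_skew (u₁ : g) (Pm ⁅(x : g), (u₂ : g)⁆ : g),
    map_neg, map_neg]
  abel

/-- part (1) of the main Theorem: For a subalgebra `h ⊆ g` with complement
`m`, projections `P_h`, `P_m`, and `ρ(x)u = P_m⁅x,u⁆`, `φ(x,u) = P_h⁅x,u⁆`,
`θ_m(u,v) = P_m⁅u,v⁆`, one has `δφ = dθ_m`:
`ρ(φ(x,u₁))u₂ − ρ(φ(x,u₂))u₁ = ρ(x)θ_m(u₁,u₂) − θ_m(ρ(x)u₁,u₂) − θ_m(u₁,ρ(x)u₂)`. -/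
theorem delta_phi_eq_d_theta_m
    {k : Type*} [Field k] {g : Type*} [LieRing g] [LieAlgebra k g]
    [FiniteDimensional k g]
    (h : LieSubalgebra k g) (m : Submodule k g)
    (hc : IsCompl h.toSubmodule m)
    (Ph : g →ₗ[k] h.toSubmodule) (Pm : g →ₗ[k] m)
    (hsum : ∀ z : g, (Ph z : g) + (Pm z : g) = z) :
    ∀ (x : h) (u₁ u₂ : m),
      Pm ⁅(Ph ⁅(x : g), (u₁ : g)⁆ : g), (u₂ : g)⁆
          - Pm ⁅(Ph ⁅(x : g), (u₂ : g)⁆ : g), (u₁ : g)⁆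
        = Pm ⁅(x : g), (Pm ⁅(u₁ : g), (u₂ : g)⁆ : g)⁆
          - Pm ⁅(Pm ⁅(x : g), (u₁ : g)⁆ : g), (u₂ : g)⁆
          - Pm ⁅(u₁ : g), (Pm ⁅(x : g), (u₂ : g)⁆ : g)⁆ :=
  delta_phi_eq_d_theta_m_general h m hc Ph Pm hsum
end

section
/- Let k be a field, g a finite-dimensional Lie algebra over k, h ⊆ g a Lie subalgebra, m ⊆ g a linear subspace with g = h ⊕ m, projections P_h, P_m, and set ρ(x)u = P_m[x,u], φ(x,u) = P_h[x,u] for x ∈ h, u ∈ m, and θ_h(u,v) = P_h[u,v], θ_m(u,v) = P_m[u,v] for u,v ∈ m. Then Qφ = dθ_h: for all x ∈ h and u₁, u₂ ∈ m, φ(φ(x,u₁), u₂) − φ(φ(x,u₂), u₁) − φ(x, θ_m(u₁,u₂)) = [x, θ_h(u₁,u₂)] − θ_h(ρ(x)u₁, u₂) − θ_h(u₁, ρ(x)u₂). -/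
/-!
Split `⁅x, uᵢ⁆` and `⁅u₁, u₂⁆` into their `h`- and `m`-components and take the `h`-component of
the Jacobi identity `⁅⁅x, u₁⁆, u₂⁆ = ⁅⁅x, u₂⁆, u₁⁆ + ⁅x, ⁅u₁, u₂⁆⁆`. The only place where `h`
being a subalgebra enters is `P_h ⁅x, θ_h(u₁, u₂)⁆ = ⁅x, θ_h(u₁, u₂)⁆`.
-/

section Projection

variable {R M : Type*} [Ring R] [AddCommGroup M] [Module R M] {p q : Submodule R M}
  (P : M →ₗ[R] p) (Q : M →ₗ[R] q)

theorem coe_apply_eq_self_of_mem (hpq : Disjoint p q) (hPQ : ∀ z, (P z : M) + Q z = z)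
    {z : M} (hz : z ∈ p) : (P z : M) = z := by
  have hQz : (Q z : M) = 0 := by
    refine Submodule.disjoint_def.mp hpq _ ?_ (Q z).2
    rw [eq_sub_of_add_eq' (hPQ z)]
    exact sub_mem hz (P z).2
  simpa [hQz] using hPQ z

end Projection

section LieSplitting

variable {R L : Type*} [Ring R] [LieRing L] [Module R L] {p q : Submodule R L}
  (P : L →ₗ[R] p) (Q : L →ₗ[R] q)

theorem coe_apply_lie_apply_left (hPQ : ∀ z, (P z : L) + Q z = z) (a b : L) :
    (P ⁅(P a : L), b⁆ : L) = P ⁅a, b⁆ - P ⁅(Q a : L), b⁆ := by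
  rw [eq_sub_of_add_eq (hPQ a), sub_lie, map_sub, Submodule.coe_sub]

theorem coe_apply_lie_apply_right (hPQ : ∀ z, (P z : L) + Q z = z) (a b : L) :
    (P ⁅a, (Q b : L)⁆ : L) = P ⁅a, b⁆ - P ⁅a, (P b : L)⁆ := by
  rw [eq_sub_of_add_eq' (hPQ b), lie_sub, map_sub, Submodule.coe_sub]

end LieSplitting

theorem Q_phi_eq_d_theta_h_general
    {k : Type*} [Field k] {g : Type*} [LieRing g] [LieAlgebra k g]
    (h : LieSubalgebra k g) (m : Submodule k g)
    (hc : IsCompl h.toSubmodule m)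
    (Ph : g →ₗ[k] h.toSubmodule) (Pm : g →ₗ[k] m)
    (hsum : ∀ z : g, (Ph z : g) + (Pm z : g) = z) :
    ∀ (x : h) (u₁ u₂ : m),
      (Ph ⁅(Ph ⁅(x : g), (u₁ : g)⁆ : g), (u₂ : g)⁆ : g)
          - (Ph ⁅(Ph ⁅(x : g), (u₂ : g)⁆ : g), (u₁ : g)⁆ : g)
          - (Ph ⁅(x : g), (Pm ⁅(u₁ : g), (u₂ : g)⁆ : g)⁆ : g)
        = ⁅(x : g), (Ph ⁅(u₁ : g), (u₂ : g)⁆ : g)⁆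
          - (Ph ⁅(Pm ⁅(x : g), (u₁ : g)⁆ : g), (u₂ : g)⁆ : g)
          - (Ph ⁅(u₁ : g), (Pm ⁅(x : g), (u₂ : g)⁆ : g)⁆ : g) := by
  intro x u₁ u₂
  have hθ : (Ph ⁅(x : g), (Ph ⁅(u₁ : g), (u₂ : g)⁆ : g)⁆ : g)
      = ⁅(x : g), (Ph ⁅(u₁ : g), (u₂ : g)⁆ : g)⁆ :=
    coe_apply_eq_self_of_mem Ph Pm hc.disjoint hsum (h.lie_mem x.2 (Ph _).2)
  have jacobi : ⁅⁅(x : g), (u₁ : g)⁆, (u₂ : g)⁆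
      = ⁅⁅(x : g), (u₂ : g)⁆, (u₁ : g)⁆ + ⁅(x : g), ⁅(u₁ : g), (u₂ : g)⁆⁆ := by
    rw [leibniz_lie, ← lie_skew (u₁ : g)]
    abel
  rw [coe_apply_lie_apply_left Ph Pm hsum, coe_apply_lie_apply_left Ph Pm hsum,
    coe_apply_lie_apply_right Ph Pm hsum, hθ, ← lie_skew (u₁ : g) (Pm _ : g), jacobi,
    map_neg, map_add, Submodule.coe_add, Submodule.coe_neg]
  abel

/-- part (2) of the main Theorem: With `φ(x,u) = P_h⁅x,u⁆`,
`ρ(x)u = P_m⁅x,u⁆`, `θ_h(u,v) = P_h⁅u,v⁆`, `θ_m(u,v) = P_m⁅u,v⁆`, one has `Qφ = dθ_h`: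
`φ(φ(x,u₁),u₂) − φ(φ(x,u₂),u₁) − φ(x,θ_m(u₁,u₂))
   = [x, θ_h(u₁,u₂)] − θ_h(ρ(x)u₁,u₂) − θ_h(u₁,ρ(x)u₂)`. -/
theorem Q_phi_eq_d_theta_h
    {k : Type*} [Field k] {g : Type*} [LieRing g] [LieAlgebra k g]
    [FiniteDimensional k g]
    (h : LieSubalgebra k g) (m : Submodule k g)
    (hc : IsCompl h.toSubmodule m)
    (Ph : g →ₗ[k] h.toSubmodule) (Pm : g →ₗ[k] m)
    (hsum : ∀ z : g, (Ph z : g) + (Pm z : g) = z) :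
    ∀ (x : h) (u₁ u₂ : m),
      (Ph ⁅(Ph ⁅(x : g), (u₁ : g)⁆ : g), (u₂ : g)⁆ : g)
          - (Ph ⁅(Ph ⁅(x : g), (u₂ : g)⁆ : g), (u₁ : g)⁆ : g)
          - (Ph ⁅(x : g), (Pm ⁅(u₁ : g), (u₂ : g)⁆ : g)⁆ : g)
        = ⁅(x : g), (Ph ⁅(u₁ : g), (u₂ : g)⁆ : g)⁆
          - (Ph ⁅(Pm ⁅(x : g), (u₁ : g)⁆ : g), (u₂ : g)⁆ : g)
          - (Ph ⁅(u₁ : g), (Pm ⁅(x : g), (u₂ : g)⁆ : g)⁆ : g) :=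
  Q_phi_eq_d_theta_h_general h m hc Ph Pm hsum
end
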